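/- Let X* have the Skellam distribution Sk(λ₁, λ₂). Then for any nonnegative integer x, the CDF relation P(X* ≤ x) = 1 - P(Q ≤ 2λ₁) holds for x > 0, where Q follows a noncentral chi-squared distribution with 2(x+1) degrees of freedom and noncentrality parameter 2λ₂; and for x ≤ 0, P(X* ≤ x) = P(Q' ≤ 2λ₂) where Q' is noncentral chi-squared with -2x degrees of freedom and noncentrality parameter 2λ₁. -/

import Mathlib

open Real Filter

/-- PMF of the Poisson distribution with mean `l`. -/
noncomputable def poissonPMF (l : ℝ) (n : ℕ) : ℝ :=
  Real.exp (-l) * l ^ n / n.factorial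

/-- PMF of the Skellam distribution `Sk(l1, l2)`, i.e. the distribution of the
difference `X₁ - X₂` of independent Poisson variables with means `l1`, `l2`,
obtained by the convolution formula. -/
noncomputable def skellamPMF (l1 l2 : ℝ) (x : ℤ) : ℝ :=
  ∑' k : ℕ, (if 0 ≤ x + (k : ℤ) then poissonPMF l1 (x + (k : ℤ)).toNat else 0) * poissonPMF l2 k

/-- Modified Bessel function of the first kind of integer order `n`,
`I_n(z) = (z/2)^|n| ∑_{k} (z/2)^{2k}/(k! (k+|n|)!)`, with `I_{-n} = I_n`. -/
noncomputable def besselI (n : ℤ) (z : ℝ) : ℝ :=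
  (z / 2) ^ n.natAbs *
    ∑' k : ℕ, (z / 2) ^ (2 * k) / ((k.factorial : ℝ) * (k + n.natAbs).factorial)

/-- Upper tail probability `P(X* ≥ a)` of the Skellam distribution. -/
noncomputable def skellamTail (l1 l2 : ℝ) (a : ℤ) : ℝ :=
  ∑' x : ℤ, if a ≤ x then skellamPMF l1 l2 x else 0

/-- Lower CDF `P(X* ≤ x)` of the Skellam distribution. -/
noncomputable def skellamCDF (l1 l2 : ℝ) (x : ℤ) : ℝ :=
  ∑' y : ℤ, if y ≤ x then skellamPMF l1 l2 y else 0

/-- Upper tail probability `P(Poisson(l) ≥ m)`. -/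
noncomputable def poissonTail (l : ℝ) (m : ℕ) : ℝ :=
  ∑' j : ℕ, if m ≤ j then poissonPMF l j else 0

/-- CDF of the noncentral chi-squared distribution with an even number `2 * m`
of degrees of freedom and noncentrality parameter `τ`, evaluated at `t`:
a Poisson(τ/2) mixture of central chi-squared CDFs, where the central
chi-squared CDF with `2 * (m + k)` degrees of freedom at `t` equals the
Poisson tail `P(Poisson(t/2) ≥ m + k)`. -/
noncomputable def ncChiSqCDFEven (m : ℕ) (τ t : ℝ) : ℝ :=
  ∑' k : ℕ, poissonPMF (τ / 2) k * poissonTail (t / 2) (m + k)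

/-!
Write `X* = X₁ - X₂` with `(X₁, X₂)` distributed as the product of the two Poisson laws.
For `x ≤ 0`, conditioning on `X₁ = n` gives `P(X* ≤ x) = ∑ₙ P(X₁ = n) P(X₂ ≥ n - x)`, which is
literally the Poisson(`λ₁`)-mixture of Poisson(`λ₂`) tails defining the noncentral χ² CDF.
For `x ≥ -1` pass to the complement `P(X* > x) = P(X₁ ≥ X₂ + x + 1)` and condition on `X₂`.
-/

lemma summable_poissonPMF (l : ℝ) : Summable (poissonPMF l) :=
  ((Real.summable_pow_div_factorial l).mul_left (Real.exp (-l))).congr fun _ =>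
    (mul_div_assoc _ _ _).symm

lemma tsum_poissonPMF (l : ℝ) : ∑' n, poissonPMF l n = 1 := by
  simp only [poissonPMF, mul_div_assoc]
  rw [tsum_mul_left, (NormedSpace.expSeries_div_hasSum_exp l).tsum_eq, ← Real.exp_eq_exp_ℝ,
    ← Real.exp_add, neg_add_cancel, Real.exp_zero]

noncomputable def poissonPairPMF (l1 l2 : ℝ) (p : ℕ × ℕ) : ℝ :=
  poissonPMF l1 p.1 * poissonPMF l2 p.2

lemma poissonPairPMF_swap (l1 l2 : ℝ) (p : ℕ × ℕ) :
    poissonPairPMF l1 l2 p.swap = poissonPairPMF l2 l1 p :=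
  mul_comm _ _

lemma summable_poissonPairPMF (l1 l2 : ℝ) : Summable (poissonPairPMF l1 l2) :=
  summable_mul_of_summable_norm (summable_poissonPMF l1).norm (summable_poissonPMF l2).norm

lemma summable_ite_poissonPairPMF (l1 l2 : ℝ) (c : ℕ × ℕ → Prop) [DecidablePred c] :
    Summable fun p => if c p then poissonPairPMF l1 l2 p else 0 :=
  ((summable_poissonPairPMF l1 l2).indicator {p | c p}).congr fun p => by
    simp only [Set.indicator_apply, Set.mem_ofPred_eq]

lemma tsum_poissonPairPMF (l1 l2 : ℝ) : ∑' p, poissonPairPMF l1 l2 p = 1 := by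
  rw [(summable_poissonPairPMF l1 l2).tsum_prod]
  simp only [poissonPairPMF, tsum_mul_left, tsum_poissonPMF, mul_one]

lemma tsum_ite_poissonPairPMF_eq_one_sub (l1 l2 : ℝ) (c : ℕ × ℕ → Prop) [DecidablePred c] :
    ∑' p, (if c p then poissonPairPMF l1 l2 p else 0) =
      1 - ∑' p, if ¬ c p then poissonPairPMF l1 l2 p else 0 := by
  rw [eq_sub_iff_add_eq, ← (summable_ite_poissonPairPMF l1 l2 c).tsum_add
    (summable_ite_poissonPairPMF l1 l2 _), ← tsum_poissonPairPMF l1 l2]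
  refine tsum_congr fun p => ?_
  split_ifs <;> simp

lemma tsum_ite_skellamPMF (l1 l2 : ℝ) (c : ℤ → Prop) [DecidablePred c] :
    ∑' y, (if c y then skellamPMF l1 l2 y else 0) =
      ∑' p : ℕ × ℕ, if c ((p.1 : ℤ) - p.2) then poissonPairPMF l1 l2 p else 0 := by
  -- `(n, k) ↦ (n - k, k)` maps `ℕ × ℕ` bijectively onto the support of the convolution summand.
  set φ : ℕ × ℕ → ℤ × ℕ := fun p => ((p.1 : ℤ) - p.2, p.2)
  set G : ℤ × ℕ → ℝ := fun q =>
    if c q.1 ∧ 0 ≤ q.1 + q.2 then poissonPMF l1 (q.1 + q.2).toNat * poissonPMF l2 q.2 else 0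
  have hφ : φ.Injective := fun p q h => by
    simp only [φ, Prod.mk.injEq] at h
    ext <;> omega
  have hGφ (p : ℕ × ℕ) :
      G (φ p) = if c ((p.1 : ℤ) - p.2) then poissonPairPMF l1 l2 p else 0 := by
    simp [G, φ, poissonPairPMF]
  have hsupp : G.support ⊆ Set.range φ := fun q hq => by
    have hpos : 0 ≤ q.1 + q.2 := (ite_ne_right_iff.mp hq).1.2
    exact ⟨((q.1 + q.2).toNat, q.2), by ext <;> simp [φ, hpos]⟩
  have hG : Summable G := (hφ.summable_iff (Function.support_subset_iff'.mp hsupp)).mp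
    ((summable_ite_poissonPairPMF l1 l2 _).congr fun p => (hGφ p).symm)
  calc ∑' y, (if c y then skellamPMF l1 l2 y else 0)
      = ∑' y, ∑' k, G (y, k) := tsum_congr fun y => by
        by_cases hy : c y <;> simp [hy, G, skellamPMF, ite_mul]
    _ = ∑' p, G (φ p) := by rw [← hG.tsum_prod' hG.prod_factor, hφ.tsum_eq hsupp]
    _ = _ := tsum_congr hGφ

lemma tsum_ite_add_le_poissonPairPMF_eq_ncChiSqCDFEven (l1 l2 : ℝ) (m : ℕ) :
    ∑' p : ℕ × ℕ, (if m + p.1 ≤ p.2 then poissonPairPMF l1 l2 p else 0) =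
      ncChiSqCDFEven m (2 * l1) (2 * l2) := by
  have hs := summable_ite_poissonPairPMF l1 l2 fun p => m + p.1 ≤ p.2
  rw [hs.tsum_prod' hs.prod_factor, ncChiSqCDFEven, mul_div_cancel_left₀ _ two_ne_zero,
    mul_div_cancel_left₀ _ two_ne_zero]
  refine tsum_congr fun n => ?_
  simp only [poissonPairPMF, ← mul_ite_zero, tsum_mul_left, poissonTail]

lemma skellamCDF_eq_tsum_poissonPairPMF (l1 l2 : ℝ) (x : ℤ) :
    skellamCDF l1 l2 x =
      ∑' p : ℕ × ℕ, if (p.1 : ℤ) - p.2 ≤ x then poissonPairPMF l1 l2 p else 0 :=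
  tsum_ite_skellamPMF l1 l2 (· ≤ x)

lemma skellamCDF_eq_ncChiSqCDFEven (l1 l2 : ℝ) {x : ℤ} (hx : x ≤ 0) :
    skellamCDF l1 l2 x = ncChiSqCDFEven (-x).toNat (2 * l1) (2 * l2) := by
  rw [skellamCDF_eq_tsum_poissonPairPMF, ← tsum_ite_add_le_poissonPairPMF_eq_ncChiSqCDFEven]
  refine tsum_congr fun p => if_congr ?_ rfl rfl
  omega

lemma skellamCDF_eq_one_sub_ncChiSqCDFEven (l1 l2 : ℝ) {x : ℤ} (hx : -1 ≤ x) :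
    skellamCDF l1 l2 x = 1 - ncChiSqCDFEven (x + 1).toNat (2 * l2) (2 * l1) := by
  rw [skellamCDF_eq_tsum_poissonPairPMF, tsum_ite_poissonPairPMF_eq_one_sub,
    ← tsum_ite_add_le_poissonPairPMF_eq_ncChiSqCDFEven, ← (Equiv.prodComm ℕ ℕ).tsum_eq]
  refine congrArg _ (tsum_congr fun p => ?_)
  rw [Equiv.prodComm_apply, poissonPairPMF_swap]
  refine if_congr ?_ rfl rfl
  simp only [Prod.fst_swap, Prod.snd_swap]
  omega

theorem skellam_cdf_noncentral_chisq_general (l1 l2 : ℝ) (x : ℤ) :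
    (0 < x →
      skellamCDF l1 l2 x = 1 - ncChiSqCDFEven (x + 1).toNat (2 * l2) (2 * l1)) ∧
    (x ≤ 0 →
      skellamCDF l1 l2 x = ncChiSqCDFEven (-x).toNat (2 * l1) (2 * l2)) :=
  ⟨fun hx => skellamCDF_eq_one_sub_ncChiSqCDFEven l1 l2 (by omega),
    skellamCDF_eq_ncChiSqCDFEven l1 l2⟩

theorem skellam_cdf_noncentral_chisq (l1 l2 : ℝ) (h1 : 0 < l1) (h2 : 0 < l2) (x : ℤ) :
    (0 < x →
      skellamCDF l1 l2 x = 1 - ncChiSqCDFEven (x + 1).toNat (2 * l2) (2 * l1)) ∧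
    (x ≤ 0 →
      skellamCDF l1 l2 x = ncChiSqCDFEven (-x).toNat (2 * l1) (2 * l2)) :=
  skellam_cdf_noncentral_chisq_general l1 l2 x
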